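/- arXiv:2206.09759 — 4 statements merged into one kernel-verified Lean document; each statement's English description precedes it below -/
import Mathlib

section
/- Theorem (SC1, zero packet loss for M-TDMA): Consider an N×N switch with periodic time-sensitive flows, where flow f_{i,j} has offset offset_{i,j} ≥ 0 and period T_{i,j} ≥ 1, and the s-th cell of f_{i,j} has lifetime the slot interval [offset_{i,j} + s·T_{i,j}, offset_{i,j} + (s+1)·T_{i,j} - 1]. If T_{i,j} ≥ N for all i,j ∈ [N], then under the M-TDMA policy for any flow decomposition set D = {M_1, ..., M_N}, every cell of every flow is assigned a scheduling slot within its lifetime, and distinct cells of the same flow are scheduled at distinct slots. -/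
/-- `A` is a permutation matrix: binary with exactly one 1 in each row and column. -/
def IsPermMatrix (N : ℕ) (A : Fin N → Fin N → ℕ) : Prop :=
  (∀ i j, A i j = 0 ∨ A i j = 1) ∧ (∀ i, ∑ j, A i j = 1) ∧ (∀ j, ∑ i, A i j = 1)

/-!
Cell `s` of a flow whose matching is scheduled at the slots `≡ k (mod N)` is served at the first
such slot after its arrival `a_s = offset + s * T`. That slot lies in `[a_s, a_s + N)`, which fits
in the lifetime `[a_s, a_s + T)` because `N ≤ T`; and since `a_s + N ≤ a_{s+1}`, consecutive cells
get strictly increasing slots.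
-/

namespace MTDMA

/-- The first slot `t ≥ a` with `t ≡ k (mod N)`. -/
def nextSlot (N k a : ℕ) : ℕ := a + (k + N - a % N) % N

theorem le_nextSlot (N k a : ℕ) : a ≤ nextSlot N k a := Nat.le_add_right _ _

theorem nextSlot_lt {N : ℕ} (hN : 0 < N) (k a : ℕ) : nextSlot N k a < a + N :=
  Nat.add_lt_add_left (Nat.mod_lt _ hN) a

theorem nextSlot_mod {N k : ℕ} (hk : k < N) (a : ℕ) : nextSlot N k a % N = k := by
  have hdecomp : a + (k + N - a % N) = N * (a / N) + (N + k) := by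
    have := Nat.div_add_mod a N
    have := Nat.mod_lt a (Nat.zero_lt_of_lt hk)
    omega
  rw [nextSlot, Nat.add_mod_mod, hdecomp, Nat.mul_add_mod, Nat.add_mod_left, Nat.mod_eq_of_lt hk]

def cellSlot (N k o T s : ℕ) : ℕ := nextSlot N k (o + s * T)

theorem cellSlot_strictMono {N : ℕ} (hN : 0 < N) (k o : ℕ) {T : ℕ} (hT : N ≤ T) :
    StrictMono (cellSlot N k o T) :=
  strictMono_nat_of_lt_succ fun s =>
    calc cellSlot N k o T s < o + s * T + N := nextSlot_lt hN k _
      _ ≤ o + (s + 1) * T := by rw [Nat.succ_mul]; omega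
      _ ≤ cellSlot N k o T (s + 1) := le_nextSlot N k _

theorem cellSlot_mem_lifetime {N : ℕ} (hN : 0 < N) (k o : ℕ) {T : ℕ} (hT : N ≤ T) (s : ℕ) :
    o + s * T ≤ cellSlot N k o T s ∧ cellSlot N k o T s ≤ o + (s + 1) * T - 1 := by
  have hlt := nextSlot_lt hN k (o + s * T)
  refine ⟨le_nextSlot N k _, ?_⟩
  rw [Nat.succ_mul]
  unfold cellSlot
  omega

end MTDMA

theorem Finset.exists_eq_one_of_sum_eq_one {ι : Type*} {s : Finset ι} {f : ι → ℕ}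
    (h : ∑ i ∈ s, f i = 1) : ∃ i ∈ s, f i = 1 := by
  obtain ⟨i, hi, hne⟩ := Finset.exists_ne_zero_of_sum_ne_zero (h ▸ one_ne_zero)
  exact ⟨i, hi, le_antisymm (h ▸ Finset.single_le_sum (fun _ _ => Nat.zero_le _) hi)
    (Nat.one_le_iff_ne_zero.mpr hne)⟩

open MTDMA in
theorem stmt10_general (N : ℕ) (hN : 0 < N) (M : Fin N → Fin N → Fin N → ℕ)
    (hsum : ∀ i j, ∑ k, M k i j = 1)
    (offset T : Fin N → Fin N → ℕ)
    (hT : ∀ i j, N ≤ T i j) :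
    ∀ i j : Fin N, ∃ σ : ℕ → ℕ,
      Function.Injective σ ∧
      ∀ s : ℕ,
        offset i j + s * T i j ≤ σ s ∧
        σ s ≤ offset i j + (s + 1) * T i j - 1 ∧
        M ⟨σ s % N, Nat.mod_lt _ hN⟩ i j = 1 := by
  intro i j
  obtain ⟨k, -, hk⟩ := Finset.exists_eq_one_of_sum_eq_one (hsum i j)
  refine ⟨cellSlot N k (offset i j) (T i j), ?_, ?_⟩
  · exact (cellSlot_strictMono hN k (offset i j) (hT i j)).injective
  · intro s
    have hslot : (⟨cellSlot N k (offset i j) (T i j) s % N, Nat.mod_lt _ hN⟩ : Fin N) = k :=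
      Fin.ext (nextSlot_mod k.isLt _)
    obtain ⟨harrival, hexpiry⟩ := cellSlot_mem_lifetime hN k (offset i j) (hT i j) s
    exact ⟨harrival, hexpiry, by rwa [hslot]⟩

/-- SC1 (zero packet loss for M-TDMA): if every period T_{i,j} ≥ N, then under M-TDMA
(matching M_{(t mod N)+1} scheduled at slot t) for any flow decomposition set, every
cell s of every flow f_{i,j} is assigned a scheduling slot within its lifetime
[offset + s·T, offset + (s+1)·T - 1], and distinct cells of the same flow get distinct
slots. -/
theorem stmt10 (N : ℕ) (hN : 0 < N) (M : Fin N → Fin N → Fin N → ℕ)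
    (hperm : ∀ k, IsPermMatrix N (M k))
    (hsum : ∀ i j, ∑ k, M k i j = 1)
    (offset T : Fin N → Fin N → ℕ)
    (hT : ∀ i j, N ≤ T i j) :
    ∀ i j : Fin N, ∃ σ : ℕ → ℕ,
      Function.Injective σ ∧
      ∀ s : ℕ,
        offset i j + s * T i j ≤ σ s ∧
        σ s ≤ offset i j + (s + 1) * T i j - 1 ∧
        M ⟨σ s % N, Nat.mod_lt _ hN⟩ i j = 1 :=
  stmt10_general N hN M hsum offset T hT
end

section
/- Let T_{i,j} ≥ N, offset_{i,j} ≥ 0, s ≥ 0 be integers, and k ∈ {1, ..., N}. Define q(s) = ⌈(s·T_{i,j} + offset_{i,j} - (k-1)) / N⌉. Then q(s) ≥ 0 and offset_{i,j} + s·T_{i,j} ≤ q(s)·N + (k-1) ≤ offset_{i,j} + (s+1)·T_{i,j} - 1. -/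
/-!
`q * N` is the least multiple of `N` that is at least `s * T + offset - (k - 1)`, so the slot
`q * N + (k - 1)` lies less than `N ≤ T` above the start `offset + s * T` of the lifetime.
-/

namespace Int

variable {K : Type*} [Field K] [LinearOrder K] [IsStrictOrderedRing K] [FloorRing K]

theorem le_ceil_div_mul {a b : ℤ} (hb : 0 < b) : a ≤ ⌈(a : K) / b⌉ * b := by
  have hbK : (0 : K) < b := by exact_mod_cast hb
  have h : (a : K) ≤ ⌈(a : K) / b⌉ * b := (div_le_iff₀ hbK).mp (le_ceil _)
  exact_mod_cast h

theorem ceil_div_mul_lt {a b : ℤ} (hb : 0 < b) : ⌈(a : K) / b⌉ * b < a + b := by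
  have hbK : (0 : K) < b := by exact_mod_cast hb
  have h : ((⌈(a : K) / b⌉ - 1 : ℤ) : K) * b < a := by
    rw [← lt_div_iff₀ hbK, cast_sub, cast_one, sub_lt_iff_lt_add]
    exact ceil_lt_add_one _
  have h' : (⌈(a : K) / b⌉ - 1) * b < a := by exact_mod_cast h
  linarith

end Int

theorem stmt11_general (N T offset s k : ℤ)
    (hN : 1 ≤ N) (hT : N ≤ T) (hoff : 0 ≤ offset) (hs : 0 ≤ s)
    (hkN : k ≤ N)
    (q : ℤ) (hq : q = ⌈((s * T + offset - (k - 1) : ℤ) : ℚ) / (N : ℚ)⌉) :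
    0 ≤ q ∧
    offset + s * T ≤ q * N + (k - 1) ∧
    q * N + (k - 1) ≤ offset + (s + 1) * T - 1 := by
  have hNpos : 0 < N := by omega
  have hlo : s * T + offset - (k - 1) ≤ q * N := hq ▸ Int.le_ceil_div_mul hNpos
  have hhi : q * N < s * T + offset - (k - 1) + N := hq ▸ Int.ceil_div_mul_lt hNpos
  have hsT : 0 ≤ s * T := mul_nonneg hs (by omega)
  have hqN : -1 * N < q * N := by linarith
  refine ⟨?_, by linarith, by linarith⟩
  linarith [lt_of_mul_lt_mul_right hqN hNpos.le]

/-- Core arithmetic lemma for SC1: with T ≥ N, offset ≥ 0, s ≥ 0, 1 ≤ k ≤ N and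
q(s) = ⌈(s·T + offset - (k-1)) / N⌉, we have q(s) ≥ 0 and the slot q(s)·N + (k-1)
lies in the lifetime [offset + s·T, offset + (s+1)·T - 1]. -/
theorem stmt11 (N T offset s k : ℤ)
    (hN : 1 ≤ N) (hT : N ≤ T) (hoff : 0 ≤ offset) (hs : 0 ≤ s)
    (hk1 : 1 ≤ k) (hkN : k ≤ N)
    (q : ℤ) (hq : q = ⌈((s * T + offset - (k - 1) : ℤ) : ℚ) / (N : ℚ)⌉) :
    0 ≤ q ∧
    offset + s * T ≤ q * N + (k - 1) ∧
    q * N + (k - 1) ≤ offset + (s + 1) * T - 1 :=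
  stmt11_general N T offset s k hN hT hoff hs hkN q hq
end

section
/- Let T_k ≥ 2, T_{i,j} ≥ 2·T_k - 1, offset_{i,j} ≥ 0, s ≥ 0 be integers and q(s) = ⌈(s·T_{i,j} + offset_{i,j}) / T_k⌉. Then (q(s)+1)·T_k - 1 ≤ offset_{i,j} + (s+1)·T_{i,j} - 1, i.e., the deadline of request q(s) of the period-T_k task does not exceed the expiration slot of cell s of flow f_{i,j}. -/
theorem ceil_intCast_div_mul_lt_add {K : Type*} [Field K] [LinearOrder K] [IsStrictOrderedRing K]
    [FloorRing K] {a b : ℤ} (hb : 0 < b) : ⌈(a : K) / b⌉ * b < a + b := by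
  have hb' : (0 : K) < b := by exact_mod_cast hb
  have hceil : (⌈(a : K) / b⌉ : K) < a / b + 1 := Int.ceil_lt_add_one _
  have hmul : (⌈(a : K) / b⌉ : K) * b < a + b := by
    calc (⌈(a : K) / b⌉ : K) * b < (a / b + 1) * b := mul_lt_mul_of_pos_right hceil hb'
      _ = a + b := by field_simp
  exact_mod_cast hmul

theorem stmt15_general (Tk Tij offset s : ℤ)
    (hTk : 2 ≤ Tk) (hTij : 2 * Tk - 1 ≤ Tij)
    (q : ℤ) (hq : q = ⌈((s * Tij + offset : ℤ) : ℚ) / (Tk : ℚ)⌉) :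
    (q + 1) * Tk - 1 ≤ offset + (s + 1) * Tij - 1 := by
  have hqTk : q * Tk < s * Tij + offset + Tk := hq ▸ ceil_intCast_div_mul_lt_add (by omega)
  -- by integrality q·Tk ≤ s·Tij + offset + Tk - 1, and 2·Tk - 1 ≤ Tij absorbs the extra Tk
  linarith

/-- With T_k ≥ 2, T_{i,j} ≥ 2·T_k - 1, offset ≥ 0, s ≥ 0 and
q(s) = ⌈(s·T_{i,j} + offset) / T_k⌉, the deadline (q(s)+1)·T_k - 1 of request q(s) of
the period-T_k task does not exceed the expiration slot offset + (s+1)·T_{i,j} - 1 of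
cell s. -/
theorem stmt15 (Tk Tij offset s : ℤ)
    (hTk : 2 ≤ Tk) (hTij : 2 * Tk - 1 ≤ Tij) (hoff : 0 ≤ offset) (hs : 0 ≤ s)
    (q : ℤ) (hq : q = ⌈((s * Tij + offset : ℤ) : ℚ) / (Tk : ℚ)⌉) :
    (q + 1) * Tk - 1 ≤ offset + (s + 1) * Tij - 1 :=
  stmt15_general Tk Tij offset s hTk hTij q hq
end

section
/- Theorem (SC2, zero packet loss for M-EDF, abstract form): Suppose for each k ∈ [N] there is a schedule function a: ℕ → [N] with the property that for every k and every q ≥ 0, there exists a slot t ∈ [q·T_k, (q+1)·T_k - 1] with a(t) = k (i.e., the virtual EDF schedule serves every request of the period-T_k task within its lifetime). Let D = {M_1, ..., M_N} be a flow decomposition set, and suppose each flow f_{i,j} ∈ M_k satisfies either (T_{i,j} = T_k and offset_{i,j} = 0) or (T_{i,j} ≥ 2·T_k - 1 and T_k ≥ 2). Then the policy scheduling matching M_{a(t)} at slot t serves every cell of every flow f_{i,j} within its lifetime [offset_{i,j} + s·T_{i,j}, offset_{i,j} + (s+1)·T_{i,j} - 1]. -/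
theorem Nat.exists_period_le_window {T W : ℕ} (hT : 0 < T) (hW : 2 * T - 1 ≤ W) (L : ℕ) :
    ∃ q, L ≤ q * T ∧ (q + 1) * T ≤ L + W := by
  refine ⟨(L + T - 1) / T, ?_, ?_⟩
  · have := Nat.lt_mul_div_succ (L + T - 1) hT
    have : (L + T - 1) / T * T + T = T * ((L + T - 1) / T + 1) := by ring
    omega
  · have := Nat.div_mul_le_self (L + T - 1) T
    rw [add_one_mul]
    omega

theorem exists_mem_window_of_forall_period {T W : ℕ} {p : ℕ → Prop} (hT : 0 < T)
    (hW : 2 * T - 1 ≤ W) (hp : ∀ q, ∃ t, q * T ≤ t ∧ t ≤ (q + 1) * T - 1 ∧ p t) (L : ℕ) :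
    ∃ t, L ≤ t ∧ t ≤ L + W - 1 ∧ p t := by
  obtain ⟨q, hLq, hqW⟩ := Nat.exists_period_le_window hT hW L
  obtain ⟨t, hqt, htq, ht⟩ := hp q
  exact ⟨t, hLq.trans hqt, htq.trans (Nat.sub_le_sub_right hqW 1), ht⟩

theorem stmt16_general (N : ℕ) (T : Fin N → ℕ)
    (a : ℕ → Fin N)
    (ha : ∀ (k : Fin N) (q : ℕ), ∃ t : ℕ,
      q * T k ≤ t ∧ t ≤ (q + 1) * T k - 1 ∧ a t = k)
    (M : Fin N → Fin N → Fin N → ℕ)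
    (hsum : ∀ i j, ∑ k, M k i j = 1)
    (offset Tij : Fin N → Fin N → ℕ)
    (hcond : ∀ i j k, M k i j = 1 →
      (Tij i j = T k ∧ offset i j = 0) ∨
      (2 * T k - 1 ≤ Tij i j ∧ 2 ≤ T k)) :
    ∀ (i j : Fin N) (s : ℕ), ∃ t : ℕ,
      offset i j + s * Tij i j ≤ t ∧
      t ≤ offset i j + (s + 1) * Tij i j - 1 ∧
      M (a t) i j = 1 := by
  intro i j s
  obtain ⟨k, -, hk⟩ := Finset.exists_eq_one_of_sum_eq_one (hsum i j)
  rcases hcond i j k hk with ⟨hTij, hoff⟩ | ⟨hTij, hT⟩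
  · obtain ⟨t, hst, hts, hat⟩ := ha k s
    exact ⟨t, by simpa [hoff, hTij] using hst, by simpa [hoff, hTij] using hts, hat ▸ hk⟩
  · obtain ⟨t, hst, hts, hat⟩ :=
      exists_mem_window_of_forall_period (by omega) hTij (ha k) (offset i j + s * Tij i j)
    rw [add_one_mul, ← add_assoc]
    exact ⟨t, hst, hts, hat ▸ hk⟩

/-- SC2 (zero packet loss for M-EDF, abstract form): suppose the virtual schedule
a : ℕ → [N] serves every request of the period-T_k task within its lifetime
[q·T_k, (q+1)·T_k - 1]. If D = {M_1,...,M_N} is a flow decomposition set and every flow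
f_{i,j} ∈ M_k satisfies either (T_{i,j} = T_k and offset_{i,j} = 0) or
(T_{i,j} ≥ 2·T_k - 1 and T_k ≥ 2), then the policy scheduling M_{a(t)} at slot t serves
every cell of every flow within its lifetime. -/
theorem stmt16 (N : ℕ) (T : Fin N → ℕ) (hTpos : ∀ k, 1 ≤ T k)
    (a : ℕ → Fin N)
    (ha : ∀ (k : Fin N) (q : ℕ), ∃ t : ℕ,
      q * T k ≤ t ∧ t ≤ (q + 1) * T k - 1 ∧ a t = k)
    (M : Fin N → Fin N → Fin N → ℕ)
    (hperm : ∀ k, IsPermMatrix N (M k))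
    (hsum : ∀ i j, ∑ k, M k i j = 1)
    (offset Tij : Fin N → Fin N → ℕ)
    (hcond : ∀ i j k, M k i j = 1 →
      (Tij i j = T k ∧ offset i j = 0) ∨
      (2 * T k - 1 ≤ Tij i j ∧ 2 ≤ T k)) :
    ∀ (i j : Fin N) (s : ℕ), ∃ t : ℕ,
      offset i j + s * Tij i j ≤ t ∧
      t ≤ offset i j + (s + 1) * Tij i j - 1 ∧
      M (a t) i j = 1 :=
  stmt16_general N T a ha M hsum offset Tij hcond
end
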